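/- Hard-triplet theorem: Let Δ_B, Δ_T be bounded real random variables on a probability space, G a sub-σ-algebra with Δ_B being G-measurable, |Δ_T| ≤ 2 a.s., E[Δ_T | G] ≤ 0 a.s., and E[Δ_T | G] < 0 on a set of positive probability. Define R(λ) = E[log(1 + exp(-(Δ_B + λΔ_T)))]. Then R(λ) < R(1) for every λ ∈ [0, 1). -/

import Mathlib

open MeasureTheory

noncomputable def ell (x : ℝ) : ℝ := Real.log (1 + Real.exp (-x))

lemma ell_hasDerivAt (x : ℝ) : HasDerivAt ell (-(1 / (Real.exp x + 1))) x := by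
  have h1 : HasDerivAt (fun y : ℝ => 1 + Real.exp (-y)) (Real.exp (-x) * (-1)) x := by
    exact (((Real.hasDerivAt_exp (-x)).comp x (hasDerivAt_neg x))).const_add 1
  have hpos : (0:ℝ) < 1 + Real.exp (-x) := by positivity
  have := h1.log (ne_of_gt hpos)
  convert this using 1
  · rfl
  have hex : Real.exp x ≠ 0 := (Real.exp_pos x).ne'
  rw [Real.exp_neg]
  field_simp

lemma ell_deriv : deriv ell = fun x => -(1 / (Real.exp x + 1)) := by
  funext x; exact (ell_hasDerivAt x).deriv

lemma ell_convex : ConvexOn ℝ Set.univ ell := by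
  apply Monotone.convexOn_univ_of_deriv
  · exact fun x => (ell_hasDerivAt x).differentiableAt
  · rw [ell_deriv]
    intro x y hxy
    have h1 : (0:ℝ) < Real.exp x + 1 := by positivity
    have h2 : Real.exp x + 1 ≤ Real.exp y + 1 := by
      have := Real.exp_le_exp.2 hxy; linarith
    have := one_div_le_one_div_of_le h1 h2
    linarith

lemma ell_tangent (a t : ℝ) : ell a + (-(1 / (Real.exp a + 1))) * t ≤ ell (a + t) := by
  rcases lt_trichotomy t 0 with ht | ht | ht
  · have hlt : a + t < a := by linarith
    have := ell_convex.slope_le_of_hasDerivAt (Set.mem_univ (a+t)) (Set.mem_univ a) hlt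
      (ell_hasDerivAt a)
    rw [slope_def_field] at this
    have hne : a - (a + t) > 0 := by linarith
    rw [div_le_iff₀ hne] at this
    nlinarith
  · simp [ht]
  · have hlt : a < a + t := by linarith
    have := ell_convex.le_slope_of_hasDerivAt (Set.mem_univ a) (Set.mem_univ (a+t)) hlt
      (ell_hasDerivAt a)
    rw [slope_def_field] at this
    have hne : a + t - a > 0 := by linarith
    rw [le_div_iff₀ hne] at this
    nlinarith

lemma ell_nonneg (x : ℝ) : 0 ≤ ell x :=
  Real.log_nonneg (by have := (Real.exp_pos (-x)).le; linarith)

lemma ell_abs_le (x C : ℝ) (h : |x| ≤ C) : |ell x| ≤ Real.log (1 + Real.exp C) := by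
  rw [abs_of_nonneg (ell_nonneg x)]
  apply Real.log_le_log (by positivity)
  have : Real.exp (-x) ≤ Real.exp C := Real.exp_le_exp.2 (by cases abs_le.1 h; linarith)
  linarith

theorem stmt_9 {Ω : Type*} (m : MeasurableSpace Ω) {mΩ : MeasurableSpace Ω}
    (μ : Measure Ω) [IsProbabilityMeasure μ]
    (hm : m ≤ mΩ)
    (ΔB ΔT : Ω → ℝ)
    (hΔB : StronglyMeasurable[m] ΔB) (hΔT : Measurable ΔT)
    (CB CT : ℝ) (hB_bdd : ∀ ω, |ΔB ω| ≤ CB) (hT_bdd : ∀ ω, |ΔT ω| ≤ CT)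
    (hT2 : ∀ᵐ ω ∂μ, |ΔT ω| ≤ 2)
    (h_le : ∀ᵐ ω ∂μ, (μ[ΔT | m]) ω ≤ 0)
    (h_pos : 0 < μ {ω | (μ[ΔT | m]) ω < 0}) :
    ∀ lam ∈ Set.Ico (0 : ℝ) 1,
      (∫ ω, Real.log (1 + Real.exp (-(ΔB ω + lam * ΔT ω))) ∂μ) <
      (∫ ω, Real.log (1 + Real.exp (-(ΔB ω + 1 * ΔT ω))) ∂μ) := by
  rintro lam ⟨hlam0, hlam1⟩
  have hBmeas : Measurable[mΩ] ΔB := (hΔB.mono hm).measurable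
  have hTmeas : Measurable[mΩ] ΔT := hΔT
  have ellcont : Continuous ell := by
    have h : Continuous fun x : ℝ => 1 + Real.exp (-x) := by continuity
    exact h.log (fun x => by positivity)
  -- integrability of ell compositions
  have int_of_bdd : ∀ (g : Ω → ℝ) (C : ℝ), Measurable[mΩ] g → (∀ ω, |g ω| ≤ C) →
      Integrable (fun ω => ell (g ω)) μ := by
    intro g C hg hgC
    refine (integrable_const (Real.log (1 + Real.exp C))).mono'
      (ellcont.measurable.comp hg).aestronglyMeasurable
      (Filter.Eventually.of_forall fun ω => ?_)
    simpa using ell_abs_le (g ω) C (hgC ω)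
  have hintT : Integrable ΔT μ :=
    (integrable_const CT).mono' (Measurable.aestronglyMeasurable (μ := μ) hTmeas)
      (Filter.Eventually.of_forall fun ω => by simpa using hT_bdd ω)
  have int0 : Integrable (fun ω => ell (ΔB ω)) μ := int_of_bdd _ CB hBmeas hB_bdd
  have int1 : Integrable (fun ω => ell (ΔB ω + ΔT ω)) μ :=
    int_of_bdd _ (CB + CT) (hBmeas.add hTmeas)
      (fun ω => (abs_add_le _ _).trans (add_le_add (hB_bdd ω) (hT_bdd ω)))
  have intlam : Integrable (fun ω => ell (ΔB ω + lam * ΔT ω)) μ := by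
    refine int_of_bdd _ (CB + 1 * CT) (hBmeas.add (measurable_const.mul hTmeas)) (fun ω => ?_)
    refine (abs_add_le _ _).trans (add_le_add (hB_bdd ω) ?_)
    rw [abs_mul, abs_of_nonneg hlam0]
    have h1 := hT_bdd ω
    have hCT : 0 ≤ CT := (abs_nonneg _).trans h1
    nlinarith
  -- the derivative weight g
  set g : Ω → ℝ := fun ω => -(1 / (Real.exp (ΔB ω) + 1)) with hg_def
  have hg_sm : StronglyMeasurable[m] g := by
    have : Continuous fun x : ℝ => -(1 / (Real.exp x + 1)) := by
      apply Continuous.neg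
      exact continuous_const.div (Real.continuous_exp.add continuous_const) (fun x => by positivity)
    exact this.comp_stronglyMeasurable hΔB
  have hg_bd : ∀ ω, ‖g ω‖ ≤ 1 := by
    intro ω
    have h1 : (0:ℝ) < Real.exp (ΔB ω) + 1 := by positivity
    have h2 : (1:ℝ) ≤ Real.exp (ΔB ω) + 1 := by have := (Real.exp_pos (ΔB ω)).le; linarith
    rw [Real.norm_eq_abs, abs_neg, abs_of_nonneg (by positivity)]
    rw [div_le_one h1]; linarith
  have hg_neg : ∀ ω, g ω < 0 := fun ω => by
    have : (0:ℝ) < 1 / (Real.exp (ΔB ω) + 1) := by positivity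
    simpa [hg_def] using this
  haveI : SigmaFinite (μ.trim hm) := by
    have : IsFiniteMeasure (μ.trim hm) := isFiniteMeasure_trim hm
    infer_instance
  -- integral of g * ΔT equals integral of g * condexp
  set E : Ω → ℝ := μ[ΔT | m] with hE_def
  have hintE : Integrable E μ := integrable_condExp
  have hgE_int : Integrable (fun ω => g ω * E ω) μ :=
    hintE.bdd_mul ((hg_sm.mono hm).aestronglyMeasurable) (Filter.Eventually.of_forall hg_bd)
  have hgT_int : Integrable (fun ω => g ω * ΔT ω) μ :=
    hintT.bdd_mul ((hg_sm.mono hm).aestronglyMeasurable) (Filter.Eventually.of_forall hg_bd)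
  have hpull : ∫ ω, g ω * ΔT ω ∂μ = ∫ ω, g ω * E ω ∂μ := by
    have h1 := condExp_stronglyMeasurable_mul_of_bound hm hg_sm hintT 1
      (Filter.Eventually.of_forall hg_bd)
    calc ∫ ω, g ω * ΔT ω ∂μ = ∫ ω, (g * ΔT) ω ∂μ := rfl
      _ = ∫ ω, (μ[g * ΔT | m]) ω ∂μ := (integral_condExp hm).symm
      _ = ∫ ω, (g * E) ω ∂μ := integral_congr_ae h1
      _ = ∫ ω, g ω * E ω ∂μ := rfl
  -- positivity of ∫ g * E
  have hgE_nonneg : 0 ≤ᵐ[μ] fun ω => g ω * E ω := by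
    filter_upwards [h_le] with ω hω
    simp only [Pi.zero_apply]
    nlinarith [mul_nonneg (neg_nonneg.2 (hg_neg ω).le) (neg_nonneg.2 hω)]
  have hgE_pos : 0 < ∫ ω, g ω * E ω ∂μ := by
    rw [integral_pos_iff_support_of_nonneg_ae hgE_nonneg hgE_int]
    refine lt_of_lt_of_le h_pos (measure_mono ?_)
    intro ω hω
    have : g ω * E ω > 0 := mul_pos_of_neg_of_neg (hg_neg ω) hω
    exact ne_of_gt this
  -- R(0) < R(1)
  have key01 : ∫ ω, ell (ΔB ω) ∂μ < ∫ ω, ell (ΔB ω + ΔT ω) ∂μ := by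
    have hpt : ∀ ω, ell (ΔB ω) + g ω * ΔT ω ≤ ell (ΔB ω + ΔT ω) :=
      fun ω => ell_tangent (ΔB ω) (ΔT ω)
    have hmono : ∫ ω, (ell (ΔB ω) + g ω * ΔT ω) ∂μ ≤ ∫ ω, ell (ΔB ω + ΔT ω) ∂μ :=
      integral_mono (int0.add hgT_int) int1 hpt
    rw [integral_add int0 hgT_int, hpull] at hmono
    linarith
  -- convexity: R(lam) ≤ (1-lam) R(0) + lam R(1)
  have keyconv : ∫ ω, ell (ΔB ω + lam * ΔT ω) ∂μ ≤
      (1 - lam) * ∫ ω, ell (ΔB ω) ∂μ + lam * ∫ ω, ell (ΔB ω + ΔT ω) ∂μ := by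
    have hpt : ∀ ω, ell (ΔB ω + lam * ΔT ω) ≤
        (1 - lam) * ell (ΔB ω) + lam * ell (ΔB ω + ΔT ω) := by
      intro ω
      have h := ell_convex.2 (Set.mem_univ (ΔB ω)) (Set.mem_univ (ΔB ω + ΔT ω))
        (by linarith : (0:ℝ) ≤ 1 - lam) hlam0 (by ring : (1 - lam) + lam = 1)
      simp only [smul_eq_mul] at h
      have harg : (1 - lam) * ΔB ω + lam * (ΔB ω + ΔT ω) = ΔB ω + lam * ΔT ω := by ring
      rw [harg] at h
      linarith
    calc ∫ ω, ell (ΔB ω + lam * ΔT ω) ∂μ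
        ≤ ∫ ω, ((1 - lam) * ell (ΔB ω) + lam * ell (ΔB ω + ΔT ω)) ∂μ :=
          integral_mono intlam ((int0.const_mul _).add (int1.const_mul _)) hpt
      _ = (1 - lam) * ∫ ω, ell (ΔB ω) ∂μ + lam * ∫ ω, ell (ΔB ω + ΔT ω) ∂μ := by
          rw [integral_add (int0.const_mul _) (int1.const_mul _),
            integral_const_mul, integral_const_mul]
  have hfinal : ∫ ω, ell (ΔB ω + lam * ΔT ω) ∂μ < ∫ ω, ell (ΔB ω + ΔT ω) ∂μ := by
    nlinarith
  simpa [ell, one_mul] using hfinal
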